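/- Let π ∈ ℝ and let v ∈ ℝ³ with v ≠ 0. Consider the function f(a) = |a|³/3 + 1/(v·a) + π (v·a) on the set A = {a ∈ ℝ³ : v·a > 0}. Then f attains its infimum over A, the minimum point is unique, and it equals ā = t⋆ v/|v| with t⋆ = √( ( √(4|v| + π²|v|⁴) − π|v|² ) / (2|v|) ); moreover ā is the unique element a ∈ A satisfying the criticality system |a| a = ( (v·a)^{−2} − π ) v. -/

import Mathlib

noncomputable section

/-- The Euclidean norm on `ℝ³`. -/
def enr (v : Fin 3 → ℝ) : ℝ := Real.sqrt (∑ i, (v i) ^ 2)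

/-- The Euclidean scalar product on `ℝ³`. -/
def dot (v a : Fin 3 → ℝ) : ℝ := ∑ i, v i * a i

/-- The function `f(a) = |a|³/3 + 1/(v·a) + π (v·a)`. -/
def fpv (π : ℝ) (v a : Fin 3 → ℝ) : ℝ :=
  (enr a) ^ 3 / 3 + 1 / dot v a + π * dot v a

/-- The optimal radius `t⋆`. -/
def tstar (π : ℝ) (v : Fin 3 → ℝ) : ℝ :=
  Real.sqrt ((Real.sqrt (4 * enr v + π ^ 2 * (enr v) ^ 4) - π * (enr v) ^ 2) / (2 * enr v))

/-- The candidate minimizer `ā = t⋆ v / |v|`. -/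
def abar (π : ℝ) (v : Fin 3 → ℝ) : Fin 3 → ℝ := (tstar π v / enr v) • v

/-
Write `V = |v|` and `s = v·a`. Cauchy–Schwarz gives `|a| ≥ s / V`, with equality exactly on the
ray through `v`, so `f(a) ≥ g(s) := (s/V)³/3 + 1/s + π s`. The radius `t⋆` is the positive root of
`t⁴ V + π t² V² = 1` (a quadratic in `t²`), which is `g'(c) = 0` for `c = t⋆ V`; this gives the
factorisation `g(s) - g(c) = (s - c)² ((s + 2c)/(3V³) + 1/(s c²))`. Hence `ā` minimises `f`, and a
minimiser has `s = c` and lies on the ray. A critical point also lies on the ray, and there the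
criticality system is the same quartic for `|a|`, whose positive root is unique.
-/

open scoped RealInnerProductSpace

def optimalRadius (π V : ℝ) : ℝ :=
  Real.sqrt ((Real.sqrt (4 * V + π ^ 2 * V ^ 4) - π * V ^ 2) / (2 * V))

section OptimalRadius

variable {π V : ℝ}

lemma optimalRadius_radicand_pos (hV : 0 < V) :
    0 < (Real.sqrt (4 * V + π ^ 2 * V ^ 4) - π * V ^ 2) / (2 * V) := by
  have hD := Real.sq_sqrt (show 0 ≤ 4 * V + π ^ 2 * V ^ 4 by positivity)
  have hlt : π * V ^ 2 < Real.sqrt (4 * V + π ^ 2 * V ^ 4) := by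
    nlinarith [Real.sqrt_nonneg (4 * V + π ^ 2 * V ^ 4)]
  exact div_pos (sub_pos.mpr hlt) (by linarith)

lemma sq_optimalRadius (hV : 0 < V) :
    optimalRadius π V ^ 2 = (Real.sqrt (4 * V + π ^ 2 * V ^ 4) - π * V ^ 2) / (2 * V) :=
  Real.sq_sqrt (optimalRadius_radicand_pos hV).le

lemma optimalRadius_pos (hV : 0 < V) : 0 < optimalRadius π V :=
  Real.sqrt_pos.mpr (optimalRadius_radicand_pos hV)

lemma optimalRadius_quartic (hV : 0 < V) :
    optimalRadius π V ^ 4 * V + π * optimalRadius π V ^ 2 * V ^ 2 = 1 := by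
  have hD := Real.sq_sqrt (show 0 ≤ 4 * V + π ^ 2 * V ^ 4 by positivity)
  rw [show optimalRadius π V ^ 4 = (optimalRadius π V ^ 2) ^ 2 by ring, sq_optimalRadius hV]
  generalize Real.sqrt (4 * V + π ^ 2 * V ^ 4) = D at hD ⊢
  field_simp
  linear_combination hD

lemma eq_optimalRadius_of_quartic {t : ℝ} (hV : 0 < V) (ht : 0 < t)
    (h : t ^ 4 * V + π * t ^ 2 * V ^ 2 = 1) : t = optimalRadius π V := by
  set T := optimalRadius π V
  have hT := optimalRadius_pos (π := π) hV
  have hfac : (t ^ 2 - T ^ 2) * (V * t ^ 2 * T ^ 2 + 1) = 0 := by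
    linear_combination T ^ 2 * h - t ^ 2 * optimalRadius_quartic (π := π) hV
  have hsq : t ^ 2 = T ^ 2 := by
    have : V * t ^ 2 * T ^ 2 + 1 ≠ 0 := by positivity
    exact sub_eq_zero.mp ((mul_eq_zero.mp hfac).resolve_right this)
  exact (pow_left_inj₀ ht.le hT.le two_ne_zero).mp hsq

end OptimalRadius

def radialEnergy (π V s : ℝ) : ℝ := (s / V) ^ 3 / 3 + 1 / s + π * s

section RadialEnergy

variable {π V s : ℝ}

lemma radialEnergy_sub_radialEnergy_optimal (hV : 0 < V) (hs : 0 < s) :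
    radialEnergy π V s - radialEnergy π V (optimalRadius π V * V) =
      (s - optimalRadius π V * V) ^ 2 *
        ((s + 2 * (optimalRadius π V * V)) / (3 * V ^ 3) + 1 / (s * (optimalRadius π V * V) ^ 2)) := by
  have hT := optimalRadius_pos (π := π) hV
  have hπ : π = (1 - optimalRadius π V ^ 4 * V) / (optimalRadius π V ^ 2 * V ^ 2) := by
    field_simp
    linear_combination optimalRadius_quartic (π := π) hV
  generalize optimalRadius π V = T at hT hπ ⊢
  subst hπ
  unfold radialEnergy
  field_simp
  ring

lemma radialEnergy_optimal_le (hV : 0 < V) (hs : 0 < s) :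
    radialEnergy π V (optimalRadius π V * V) ≤ radialEnergy π V s := by
  have hT := optimalRadius_pos (π := π) hV
  have hdiff_nonneg : 0 ≤ radialEnergy π V s - radialEnergy π V (optimalRadius π V * V) := by
    rw [radialEnergy_sub_radialEnergy_optimal hV hs]; positivity
  linarith

lemma eq_optimal_of_radialEnergy_le (hV : 0 < V) (hs : 0 < s)
    (h : radialEnergy π V s ≤ radialEnergy π V (optimalRadius π V * V)) :
    s = optimalRadius π V * V := by
  have hT := optimalRadius_pos (π := π) hV
  have hfactor : 0 < (s + 2 * (optimalRadius π V * V)) / (3 * V ^ 3) +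
      1 / (s * (optimalRadius π V * V) ^ 2) := by positivity
  have hprod : (s - optimalRadius π V * V) ^ 2 * ((s + 2 * (optimalRadius π V * V)) / (3 * V ^ 3) +
      1 / (s * (optimalRadius π V * V) ^ 2)) ≤ 0 := by
    rw [← radialEnergy_sub_radialEnergy_optimal hV hs]; linarith
  have hsq := le_antisymm (nonpos_of_mul_nonpos_left hprod hfactor) (sq_nonneg _)
  exact sub_eq_zero.mp (pow_eq_zero_iff two_ne_zero |>.mp hsq)

end RadialEnergy

section InnerProductSpace

variable {E : Type*} [NormedAddCommGroup E] [InnerProductSpace ℝ E] {π : ℝ} {v a : E}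

def energy (π : ℝ) (v a : E) : ℝ := ‖a‖ ^ 3 / 3 + 1 / ⟪v, a⟫ + π * ⟪v, a⟫

def minimizer (π : ℝ) (v : E) : E := (optimalRadius π ‖v‖ / ‖v‖) • v

lemma norm_minimizer (hv : v ≠ 0) : ‖minimizer π v‖ = optimalRadius π ‖v‖ := by
  have hV := norm_pos_iff.mpr hv
  rw [minimizer, norm_smul, Real.norm_of_nonneg (div_pos (optimalRadius_pos hV) hV).le]
  field_simp

lemma inner_minimizer (hv : v ≠ 0) : ⟪v, minimizer π v⟫ = optimalRadius π ‖v‖ * ‖v‖ := by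
  have hV := norm_pos_iff.mpr hv
  rw [minimizer, inner_smul_right, real_inner_self_eq_norm_sq]
  field_simp

lemma inner_minimizer_pos (hv : v ≠ 0) : 0 < ⟪v, minimizer π v⟫ := by
  have hV := norm_pos_iff.mpr hv
  rw [inner_minimizer hv]
  exact mul_pos (optimalRadius_pos hV) hV

lemma energy_minimizer (hv : v ≠ 0) :
    energy π v (minimizer π v) = radialEnergy π ‖v‖ (optimalRadius π ‖v‖ * ‖v‖) := by
  have hV := norm_pos_iff.mpr hv
  rw [energy, radialEnergy, norm_minimizer hv, inner_minimizer hv, mul_div_cancel_right₀ _ hV.ne']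

lemma radialEnergy_le_energy (hv : v ≠ 0) (ha : 0 < ⟪v, a⟫) :
    radialEnergy π ‖v‖ ⟪v, a⟫ ≤ energy π v a := by
  have hV := norm_pos_iff.mpr hv
  have hcs : ⟪v, a⟫ / ‖v‖ ≤ ‖a‖ := by
    rw [div_le_iff₀ hV, mul_comm]; exact real_inner_le_norm v a
  have := pow_le_pow_left₀ (by positivity) hcs 3
  rw [radialEnergy, energy]
  linarith

lemma energy_minimizer_le (hv : v ≠ 0) (ha : 0 < ⟪v, a⟫) :
    energy π v (minimizer π v) ≤ energy π v a := by
  rw [energy_minimizer hv]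
  exact (radialEnergy_optimal_le (norm_pos_iff.mpr hv) ha).trans (radialEnergy_le_energy hv ha)

lemma eq_minimizer_of_norm_eq_of_inner_eq (hv : v ≠ 0) (hnorm : ‖a‖ = optimalRadius π ‖v‖)
    (hinner : ⟪v, a⟫ = optimalRadius π ‖v‖ * ‖v‖) : a = minimizer π v := by
  have hV := norm_pos_iff.mpr hv
  have hparallel := inner_eq_norm_mul_iff_real.mp (by rw [hinner, hnorm, mul_comm])
  rw [minimizer, ← hnorm, div_eq_inv_mul, ← smul_smul, hparallel, smul_smul,
    inv_mul_cancel₀ hV.ne', one_smul]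

lemma eq_minimizer_of_energy_le (hv : v ≠ 0) (ha : 0 < ⟪v, a⟫)
    (hmin : energy π v a ≤ energy π v (minimizer π v)) : a = minimizer π v := by
  have hV := norm_pos_iff.mpr hv
  have hlow := radialEnergy_le_energy (π := π) hv ha
  rw [energy_minimizer hv] at hmin
  have hinner := eq_optimal_of_radialEnergy_le hV ha (hlow.trans hmin)
  have hnorm : ‖a‖ = optimalRadius π ‖v‖ := by
    have hT := optimalRadius_pos (π := π) hV
    refine le_antisymm ?_ ?_
    · have hcube : ‖a‖ ^ 3 ≤ optimalRadius π ‖v‖ ^ 3 := by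
        rw [energy, radialEnergy, mul_div_cancel_right₀ _ hV.ne', ← hinner] at hmin
        linarith
      exact (pow_le_pow_iff_left₀ (norm_nonneg a) hT.le three_ne_zero).mp hcube
    · have := real_inner_le_norm v a
      rw [hinner] at this
      exact le_of_mul_le_mul_right (by linarith) hV
  exact eq_minimizer_of_norm_eq_of_inner_eq hv hnorm hinner

lemma minimizer_critical (hv : v ≠ 0) :
    ‖minimizer π v‖ • minimizer π v = ((⟪v, minimizer π v⟫ ^ 2)⁻¹ - π) • v := by
  have hV := norm_pos_iff.mpr hv
  have hT := optimalRadius_pos (π := π) hV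
  have hquartic := optimalRadius_quartic (π := π) hV
  rw [norm_minimizer hv, inner_minimizer hv, minimizer, smul_smul]
  congr 1
  generalize optimalRadius π ‖v‖ = T at hT hquartic ⊢
  field_simp
  linear_combination hquartic

lemma eq_minimizer_of_critical (hv : v ≠ 0) (ha : 0 < ⟪v, a⟫)
    (hcrit : ‖a‖ • a = ((⟪v, a⟫ ^ 2)⁻¹ - π) • v) : a = minimizer π v := by
  have hV := norm_pos_iff.mpr hv
  have hna : 0 < ‖a‖ := norm_pos_iff.mpr (by rintro rfl; simp at ha)
  obtain ⟨c, hc, hav⟩ : ∃ c, c = ((⟪v, a⟫ ^ 2)⁻¹ - π) / ‖a‖ ∧ a = c • v := by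
    refine ⟨_, rfl, ?_⟩
    rw [div_eq_inv_mul, ← smul_smul, ← hcrit, smul_smul, inv_mul_cancel₀ hna.ne', one_smul]
  have hinner : ⟪v, a⟫ = c * ‖v‖ ^ 2 := by
    rw [hav, inner_smul_right, real_inner_self_eq_norm_sq]
  have hc_pos : 0 < c := pos_of_mul_pos_left (hinner ▸ ha) (sq_nonneg _)
  have hnorm : ‖a‖ = c * ‖v‖ := by
    rw [hav, norm_smul, Real.norm_of_nonneg hc_pos.le]
  have hinner' : ⟪v, a⟫ = ‖a‖ * ‖v‖ := by rw [hinner, hnorm]; ring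
  have hquartic : ‖a‖ ^ 4 * ‖v‖ + π * ‖a‖ ^ 2 * ‖v‖ ^ 2 = 1 := by
    rw [hinner', hnorm] at hc
    rw [hnorm]
    field_simp at hc
    linear_combination hc
  have hT := eq_optimalRadius_of_quartic hV hna hquartic
  exact eq_minimizer_of_norm_eq_of_inner_eq hv hT (by rw [hinner', hT])

end InnerProductSpace

lemma enr_eq_norm_toLp (a : Fin 3 → ℝ) : enr a = ‖WithLp.toLp 2 a‖ := by
  simp [enr, EuclideanSpace.norm_eq]

lemma dot_eq_inner_toLp (v a : Fin 3 → ℝ) : dot v a = ⟪WithLp.toLp 2 v, WithLp.toLp 2 a⟫ := by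
  simp [dot, PiLp.inner_apply, mul_comm]

lemma fpv_eq_energy_toLp (π : ℝ) (v a : Fin 3 → ℝ) :
    fpv π v a = energy π (WithLp.toLp 2 v) (WithLp.toLp 2 a) := by
  rw [fpv, energy, enr_eq_norm_toLp, dot_eq_inner_toLp]

lemma toLp_abar (π : ℝ) (v : Fin 3 → ℝ) :
    WithLp.toLp 2 (abar π v) = minimizer π (WithLp.toLp 2 v) := by
  rw [abar, minimizer, tstar, WithLp.toLp_smul, enr_eq_norm_toLp, optimalRadius]

/-- On `A = {a : v·a > 0}`, the function `f` attains its infimum at the unique minimum point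
`ā = t⋆ v/|v|`, which is also the unique solution in `A` of the criticality system
`|a| a = ((v·a)⁻² − π) v`. -/
theorem stmt10 (π : ℝ) (v : Fin 3 → ℝ) (hv : v ≠ 0) :
    0 < dot v (abar π v) ∧
    (∀ a : Fin 3 → ℝ, 0 < dot v a → fpv π v (abar π v) ≤ fpv π v a) ∧
    (∀ a : Fin 3 → ℝ, 0 < dot v a →
      (∀ b : Fin 3 → ℝ, 0 < dot v b → fpv π v a ≤ fpv π v b) → a = abar π v) ∧
    (enr (abar π v) • abar π v = (((dot v (abar π v)) ^ 2)⁻¹ - π) • v) ∧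
    (∀ a : Fin 3 → ℝ, 0 < dot v a →
      enr a • a = (((dot v a) ^ 2)⁻¹ - π) • v → a = abar π v) := by
  have hv' : WithLp.toLp 2 v ≠ 0 := by simpa using hv
  have hinj := WithLp.toLp_injective 2 (V := Fin 3 → ℝ)
  simp only [fpv_eq_energy_toLp, dot_eq_inner_toLp, enr_eq_norm_toLp, ← hinj.eq_iff,
    WithLp.toLp_smul, toLp_abar]
  refine ⟨inner_minimizer_pos hv', fun a ha ↦ energy_minimizer_le hv' ha,
    fun a ha hmin ↦ eq_minimizer_of_energy_le hv' ha (hmin _ (inner_minimizer_pos hv')),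
    minimizer_critical hv', fun a ha hcrit ↦ eq_minimizer_of_critical hv' ha hcrit⟩
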